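/- Under assumptions (H1)–(H4), for every fixed (x0,p0) ∈ ℝ^N × ℝ^N the set of b ∈ ℝ such that the stationary equation H(x0,y,p0,Du(y)) = b admits a viscosity subsolution u : ℝ^M → ℝ is nonempty and bounded below; consequently the critical value c0 = H̄(x0,p0) is a finite real number, and hence the effective Hamiltonian H̄ is real-valued on all of ℝ^N × ℝ^N. -/
import Mathlib


open Set MeasureTheory Metric Filter
open scoped RealInnerProductSpace Topology

noncomputable section

/-- `ℝ^n` with the Euclidean structure. -/
abbrev Euc (n : ℕ) : Type := EuclideanSpace ℝ (Fin n)

/-- A control: a measurable map with values in the control set `A`. -/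
def IsControl {k : ℕ} (A : Set (Euc k)) (α : ℝ → Euc k) : Prop :=
  Measurable α ∧ ∀ t, α t ∈ A

/-- `(ξ, η)` is a trajectory of the controlled dynamics `(CD_ε)` for the control `α`:
this is the integral form, equivalent to `(ξ, η)` being locally absolutely continuous
with `ξ' = ε f(ξ, η, α)` and `η' = g(ξ, η, α)` a.e. on `[0, ∞)`. -/
def IsTrajectory {N M k : ℕ}
    (f : Euc N → Euc M → Euc k → Euc N) (g : Euc N → Euc M → Euc k → Euc M)
    (ε : ℝ) (α : ℝ → Euc k) (ξ : ℝ → Euc N) (η : ℝ → Euc M) : Prop :=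
  (∀ t, 0 ≤ t → IntervalIntegrable (fun s => f (ξ s) (η s) (α s)) volume 0 t) ∧
  (∀ t, 0 ≤ t → IntervalIntegrable (fun s => g (ξ s) (η s) (α s)) volume 0 t) ∧
  (∀ t, 0 ≤ t → ξ t = ξ 0 + ε • ∫ s in (0:ℝ)..t, f (ξ s) (η s) (α s)) ∧
  (∀ t, 0 ≤ t → η t = η 0 + ∫ s in (0:ℝ)..t, g (ξ s) (η s) (α s))

/-- The value function `V^ε(x, y, t)` of the singularly perturbed optimal control problem. -/
def valueFun {N M k : ℕ} (A : Set (Euc k))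
    (f : Euc N → Euc M → Euc k → Euc N) (g : Euc N → Euc M → Euc k → Euc M)
    (ℓ : Euc N → Euc M → Euc k → ℝ) (u0 : Euc N → Euc M → ℝ)
    (ε : ℝ) (x : Euc N) (y : Euc M) (t : ℝ) : ℝ :=
  sInf { v : ℝ | ∃ (α : ℝ → Euc k) (ξ : ℝ → Euc N) (η : ℝ → Euc M),
    IsControl A α ∧ IsTrajectory f g ε α ξ η ∧ ξ 0 = x ∧ η 0 = y ∧
    IntervalIntegrable (fun s => ℓ (ξ s) (η s) (α s)) volume 0 (t / ε) ∧
    v = ε * (∫ s in (0:ℝ)..(t / ε), ℓ (ξ s) (η s) (α s)) + u0 (ξ (t / ε)) (η (t / ε)) }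

/-- The Hamiltonian `H(x,y,p,q) = max_{a ∈ A} { -p·f(x,y,a) - q·g(x,y,a) - ℓ(x,y,a) }`. -/
def Ham {N M k : ℕ} (A : Set (Euc k))
    (f : Euc N → Euc M → Euc k → Euc N) (g : Euc N → Euc M → Euc k → Euc M)
    (ℓ : Euc N → Euc M → Euc k → ℝ)
    (x : Euc N) (y : Euc M) (p : Euc N) (q : Euc M) : ℝ :=
  sSup ((fun a => -⟪p, f x y a⟫ - ⟪q, g x y a⟫ - ℓ x y a) '' A)

/-- Viscosity subsolution of the stationary equation `G(y, Du) = b` on `Ω`. -/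
def IsVSubOn {m : ℕ} (G : Euc m → Euc m → ℝ) (b : ℝ) (Ω : Set (Euc m)) (u : Euc m → ℝ) : Prop :=
  UpperSemicontinuousOn u Ω ∧
  ∀ ψ : Euc m → ℝ, ContDiff ℝ 1 ψ → ∀ y ∈ Ω,
    IsLocalMaxOn (fun z => u z - ψ z) Ω y → G y (gradient ψ y) ≤ b

/-- Viscosity supersolution of the stationary equation `G(y, Du) = b` on `Ω`. -/
def IsVSupOn {m : ℕ} (G : Euc m → Euc m → ℝ) (b : ℝ) (Ω : Set (Euc m)) (u : Euc m → ℝ) : Prop :=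
  LowerSemicontinuousOn u Ω ∧
  ∀ ψ : Euc m → ℝ, ContDiff ℝ 1 ψ → ∀ y ∈ Ω,
    IsLocalMinOn (fun z => u z - ψ z) Ω y → b ≤ G y (gradient ψ y)

/-- The set of levels `b` for which `F(y, Du) = b` has a viscosity subsolution on `ℝ^m`. -/
def subsolLevels {m : ℕ} (F : Euc m → Euc m → ℝ) : Set ℝ :=
  { b : ℝ | ∃ u : Euc m → ℝ, IsVSubOn F b univ u }

/-- The critical value of a Hamiltonian `F` on `ℝ^m`. -/
def critVal {m : ℕ} (F : Euc m → Euc m → ℝ) : ℝ :=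
  sInf (subsolLevels F)

/-- The effective Hamiltonian `H̄(x, p)`. -/
def effH {N M k : ℕ} (A : Set (Euc k))
    (f : Euc N → Euc M → Euc k → Euc N) (g : Euc N → Euc M → Euc k → Euc M)
    (ℓ : Euc N → Euc M → Euc k → ℝ) (x : Euc N) (p : Euc N) : ℝ :=
  critVal (fun (y q : Euc M) => Ham A f g ℓ x y p q)

/-- The frozen Hamiltonian `H₀(y, q) = H(x₀, y, p₀, q)` of the cell problem. -/
def cellH {N M k : ℕ} (A : Set (Euc k))
    (f : Euc N → Euc M → Euc k → Euc N) (g : Euc N → Euc M → Euc k → Euc M)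
    (ℓ : Euc N → Euc M → Euc k → ℝ) (x0 p0 : Euc N) : Euc M → Euc M → ℝ :=
  fun y q => Ham A f g ℓ x0 y p0 q

/-- Viscosity subsolution of `u_t + G(x, D_x u) = 0` on `Ω ⊆ ℝ^n × ℝ`. -/
def IsParabSubOn {n : ℕ} (G : Euc n → Euc n → ℝ) (Ω : Set (Euc n × ℝ)) (u : Euc n × ℝ → ℝ) : Prop :=
  UpperSemicontinuousOn u Ω ∧
  ∀ ψ : Euc n × ℝ → ℝ, ContDiff ℝ 1 ψ → ∀ z ∈ Ω,
    IsLocalMaxOn (fun w => u w - ψ w) Ω z →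
    deriv (fun s => ψ (z.1, s)) z.2 + G z.1 (gradient (fun x => ψ (x, z.2)) z.1) ≤ 0

/-- Viscosity supersolution of `u_t + G(x, D_x u) = 0` on `Ω ⊆ ℝ^n × ℝ`. -/
def IsParabSupOn {n : ℕ} (G : Euc n → Euc n → ℝ) (Ω : Set (Euc n × ℝ)) (u : Euc n × ℝ → ℝ) : Prop :=
  LowerSemicontinuousOn u Ω ∧
  ∀ ψ : Euc n × ℝ → ℝ, ContDiff ℝ 1 ψ → ∀ z ∈ Ω,
    IsLocalMinOn (fun w => u w - ψ w) Ω z →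
    0 ≤ deriv (fun s => ψ (z.1, s)) z.2 + G z.1 (gradient (fun x => ψ (x, z.2)) z.1)

/-- Viscosity subsolution of `u_t + H(x, y, D_x u, D_y u / ε) = 0` on `Ω ⊆ (ℝ^N × ℝ^M) × ℝ`. -/
def IsHJSubOn {N M : ℕ} (Hm : Euc N → Euc M → Euc N → Euc M → ℝ) (ε : ℝ)
    (Ω : Set ((Euc N × Euc M) × ℝ)) (u : (Euc N × Euc M) × ℝ → ℝ) : Prop :=
  UpperSemicontinuousOn u Ω ∧
  ∀ ψ : (Euc N × Euc M) × ℝ → ℝ, ContDiff ℝ 1 ψ → ∀ z ∈ Ω,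
    IsLocalMaxOn (fun w => u w - ψ w) Ω z →
    deriv (fun s => ψ (z.1, s)) z.2 +
      Hm z.1.1 z.1.2 (gradient (fun x => ψ ((x, z.1.2), z.2)) z.1.1)
        (ε⁻¹ • gradient (fun y => ψ ((z.1.1, y), z.2)) z.1.2) ≤ 0

/-- Viscosity supersolution of `u_t + H(x, y, D_x u, D_y u / ε) = 0` on `Ω`. -/
def IsHJSupOn {N M : ℕ} (Hm : Euc N → Euc M → Euc N → Euc M → ℝ) (ε : ℝ)
    (Ω : Set ((Euc N × Euc M) × ℝ)) (u : (Euc N × Euc M) × ℝ → ℝ) : Prop :=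
  LowerSemicontinuousOn u Ω ∧
  ∀ ψ : (Euc N × Euc M) × ℝ → ℝ, ContDiff ℝ 1 ψ → ∀ z ∈ Ω,
    IsLocalMinOn (fun w => u w - ψ w) Ω z →
    0 ≤ deriv (fun s => ψ (z.1, s)) z.2 +
      Hm z.1.1 z.1.2 (gradient (fun x => ψ ((x, z.1.2), z.2)) z.1.1)
        (ε⁻¹ • gradient (fun y => ψ ((z.1.1, y), z.2)) z.1.2)

/-- The upper weak semilimit `(limsup^# V^ε)(z)`. -/
def upperLim {Z : Type*} [TopologicalSpace Z] (V : ℝ → Z → ℝ) (z : Z) : ℝ :=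
  sSup { l : ℝ | ∃ (e : ℕ → ℝ) (w : ℕ → Z), (∀ n, 0 < e n) ∧
    Tendsto e atTop (𝓝 0) ∧ Tendsto w atTop (𝓝 z) ∧
    l = Filter.limsup (fun n => V (e n) (w n)) atTop }

/-- The lower weak semilimit `(liminf_# V^ε)(z)`. -/
def lowerLim {Z : Type*} [TopologicalSpace Z] (V : ℝ → Z → ℝ) (z : Z) : ℝ :=
  sInf { l : ℝ | ∃ (e : ℕ → ℝ) (w : ℕ → Z), (∀ n, 0 < e n) ∧
    Tendsto e atTop (𝓝 0) ∧ Tendsto w atTop (𝓝 z) ∧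
    l = Filter.liminf (fun n => V (e n) (w n)) atTop }

/-- The lower semicontinuous envelope `φ_#`. -/
def lscEnvelope {X : Type*} [TopologicalSpace X] (φ : X → ℝ) (x : X) : ℝ :=
  Filter.liminf φ (𝓝 x)

/-- Local equiboundedness of the family of value functions. -/
def LocEquibounded {N M : ℕ} (V : ℝ → Euc N → Euc M → ℝ → ℝ) : Prop :=
  ∀ C : Set (Euc N × Euc M × ℝ), Bornology.IsBounded C →
    ∃ Mb : ℝ, ∀ ε : ℝ, 0 < ε → ∀ z ∈ C, 0 ≤ z.2.2 → |V ε z.1 z.2.1 z.2.2| ≤ Mb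

/-- The sublevel set `Z_b(y)` of a Hamiltonian. -/
def sublevel {m : ℕ} (G : Euc m → Euc m → ℝ) (b : ℝ) (y : Euc m) : Set (Euc m) :=
  { q | G y q ≤ b }

/-- The support function `σ_b(y, v)` of the sublevel `Z_b(y)`. -/
def suppFn {m : ℕ} (G : Euc m → Euc m → ℝ) (b : ℝ) (y v : Euc m) : ℝ :=
  sSup ((fun q => ⟪q, v⟫) '' sublevel G b y)

/-- The intrinsic length of a curve (Lipschitz curves are differentiable a.e.). -/
def intrinsicLen {m : ℕ} (G : Euc m → Euc m → ℝ) (b : ℝ) (ξ : ℝ → Euc m) : ℝ :=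
  ∫ s in (0:ℝ)..1, suppFn G b (ξ s) (deriv ξ s)

/-- Admissible (Lipschitz) curves on `[0,1]` joining `y₁` to `y₂`. -/
def IsAdmCurve {m : ℕ} (ξ : ℝ → Euc m) (y₁ y₂ : Euc m) : Prop :=
  (∃ Kl : NNReal, LipschitzWith Kl ξ) ∧ ξ 0 = y₁ ∧ ξ 1 = y₂

/-- The intrinsic distance `S_b(y₁, y₂)`. -/
def intrinsicDist {m : ℕ} (G : Euc m → Euc m → ℝ) (b : ℝ) (y₁ y₂ : Euc m) : ℝ :=
  sInf { L : ℝ | ∃ ξ : ℝ → Euc m, IsAdmCurve ξ y₁ y₂ ∧ L = intrinsicLen G b ξ }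

/-- The weighted intrinsic length associated with a weight `h`. -/
def wIntrinsicLen {m : ℕ} (G : Euc m → Euc m → ℝ) (b : ℝ) (h : Euc m → ℝ) (ξ : ℝ → Euc m) : ℝ :=
  ∫ s in (0:ℝ)..1, h (ξ s) * suppFn G b (ξ s) (deriv ξ s)

/-- The weighted intrinsic distance `S_b^h(y₁, y₂)`. -/
def wIntrinsicDist {m : ℕ} (G : Euc m → Euc m → ℝ) (b : ℝ) (h : Euc m → ℝ) (y₁ y₂ : Euc m) : ℝ :=
  sInf { L : ℝ | ∃ ξ : ℝ → Euc m, IsAdmCurve ξ y₁ y₂ ∧ L = wIntrinsicLen G b h ξ }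

/-- The intrinsic critical distance `S(y₁, y₂)` of the cell problem at `(x₀, p₀)`. -/
def cellS {N M k : ℕ} (A : Set (Euc k))
    (f : Euc N → Euc M → Euc k → Euc N) (g : Euc N → Euc M → Euc k → Euc M)
    (ℓ : Euc N → Euc M → Euc k → ℝ) (x0 p0 : Euc N) (y₁ y₂ : Euc M) : ℝ :=
  intrinsicDist (cellH A f g ℓ x0 p0) (effH A f g ℓ x0 p0) y₁ y₂

/-- The Aubry set of `G` at the level `c`: points near which no global viscosity
subsolution of `G(y, Du) = c` is strict. -/
def AubrySet {m : ℕ} (G : Euc m → Euc m → ℝ) (c : ℝ) : Set (Euc m) :=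
  { y₀ | ¬ ∃ (u : Euc m → ℝ) (δ : ℝ) (U : Set (Euc m)),
      IsVSubOn G c univ u ∧ 0 < δ ∧ IsOpen U ∧ y₀ ∈ U ∧ IsVSubOn G (c - δ) U u }

end

/-- Extreme value theorem for usc functions on compact sets. -/
theorem usc_exists_isMaxOn' {X : Type*} [TopologicalSpace X] {K : Set X} (hK : IsCompact K)
    (hne : K.Nonempty) {f : X → ℝ} (hf : UpperSemicontinuousOn f K) :
    ∃ x ∈ K, ∀ z ∈ K, f z ≤ f x := by
  by_contra hno
  push_neg at hno
  choose y hyK hylt using fun x (hx : x ∈ K) => hno x hx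
  have hev : ∀ x (hx : x ∈ K), {z | f z < f (y x hx)} ∈ nhdsWithin x K := fun x hx =>
    hf x hx _ (hylt x hx)
  have hU : ∀ x (hx : x ∈ K), ∃ V : Set X, V ∈ nhds x ∧ ∀ z ∈ V ∩ K, f z < f (y x hx) := by
    intro x hx
    rcases mem_nhdsWithin.mp (hev x hx) with ⟨V, hVo, hxV, hsub⟩
    exact ⟨V, hVo.mem_nhds hxV, fun z hz => hsub hz⟩
  choose V hVmem hVlt using hU
  rcases hK.elim_nhds_subcover' V hVmem with ⟨t, ht⟩
  have htne : t.Nonempty := by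
    rcases hne with ⟨x0, hx0⟩
    rcases mem_iUnion₂.mp (ht hx0) with ⟨i, hi, _⟩
    exact ⟨i, hi⟩
  rcases t.exists_max_image (fun i => f (y i.1 i.2)) htne with ⟨i, hit, hmax⟩
  have hyiK : y i.1 i.2 ∈ K := hyK _ _
  rcases mem_iUnion₂.mp (ht hyiK) with ⟨j, hjt, hjmem⟩
  have h1 : f (y i.1 i.2) < f (y j.1 j.2) := hVlt j.1 j.2 _ ⟨hjmem, hyiK⟩
  have h2 : f (y j.1 j.2) ≤ f (y i.1 i.2) := hmax j hjt
  linarith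


theorem statement10
    {N M k : ℕ} (A : Set (Euc k)) (hA : IsCompact A) (hAne : A.Nonempty)
    (f : Euc N → Euc M → Euc k → Euc N) (g : Euc N → Euc M → Euc k → Euc M)
    (L0 Q0 : ℝ) (hL0 : 0 < L0) (hQ0 : 0 < Q0)
    (hfLip : ∀ (x₁ x₂ : Euc N) (y₁ y₂ : Euc M), ∀ a ∈ A,
      ‖f x₁ y₁ a - f x₂ y₂ a‖ ≤ L0 * (‖x₁ - x₂‖ + ‖y₁ - y₂‖))
    (hgLip : ∀ (x₁ x₂ : Euc N) (y₁ y₂ : Euc M), ∀ a ∈ A,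
      ‖g x₁ y₁ a - g x₂ y₂ a‖ ≤ L0 * (‖x₁ - x₂‖ + ‖y₁ - y₂‖))
    (hfBdd : ∀ x y, ∀ a ∈ A, ‖f x y a‖ ≤ Q0)
    (hctrl : ∀ K : Set (Euc N × Euc M), IsCompact K → ∃ r > 0, ∀ z ∈ K,
      Metric.ball (0 : Euc M) r ⊆ closure (convexHull ℝ ((fun a => g z.1 z.2 a) '' A)))
    (ℓ : Euc N → Euc M → Euc k → ℝ)
    (hlCont : Continuous fun z : Euc N × Euc M × Euc k => ℓ z.1 z.2.1 z.2.2)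
    (hlCoer : ∀ B : Set (Euc N), IsCompact B → ∀ c : ℝ, ∃ R : ℝ,
      ∀ y : Euc M, R < ‖y‖ → ∀ x ∈ B, ∀ a ∈ A, c < ℓ x y a)
 :
    ∀ (x0 p0 : Euc N),
      (subsolLevels (cellH A f g ℓ x0 p0)).Nonempty ∧
      BddBelow (subsolLevels (cellH A f g ℓ x0 p0)) := by
  intro x0 p0
  -- abbreviate the frozen Hamiltonian
  constructor
  · -- Nonemptiness: the zero function is a subsolution for a large level `b1`.
    -- A lower bound for `ℓ x0 · ·`.
    obtain ⟨R, hR⟩ := hlCoer {x0} isCompact_singleton 0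
    set R' : ℝ := max R 0 with hR'
    have hKR : IsCompact ((closedBall (0 : Euc M) R') ×ˢ A) :=
      (isCompact_closedBall _ _).prod hA
    have hKRne : ((closedBall (0 : Euc M) R') ×ˢ A).Nonempty := by
      rcases hAne with ⟨a0, ha0⟩
      exact ⟨(0, a0), by simp [hR'], ha0⟩
    have hcontℓ : Continuous fun z : Euc M × Euc k => ℓ x0 z.1 z.2 :=
      hlCont.comp (continuous_const.prodMk continuous_id)
    obtain ⟨zm, hzm, hzmin⟩ := hKR.exists_isMinOn hKRne hcontℓ.continuousOn
    set m : ℝ := ℓ x0 zm.1 zm.2 with hm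
    have hlb : ∀ y : Euc M, ∀ a ∈ A, min 0 m ≤ ℓ x0 y a := by
      intro y a ha
      by_cases hy : R < ‖y‖
      · exact le_trans (min_le_left _ _) (hR y hy x0 rfl a ha).le
      · push_neg at hy
        have : (y, a) ∈ (closedBall (0 : Euc M) R') ×ˢ A := by
          refine ⟨?_, ha⟩
          simp only [mem_closedBall, dist_zero_right]
          exact le_trans hy (le_max_left _ _)
        exact le_trans (min_le_right _ _) (hzmin this)
    set b1 : ℝ := max 0 (‖p0‖ * Q0 + -(min 0 m)) with hb1
    refine ⟨b1, fun _ => 0, ?_, ?_⟩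
    · exact (continuous_const.upperSemicontinuous).upperSemicontinuousOn _
    · intro ψ hψ y _ hmax
      have hmin : IsLocalMin ψ y := by
        have := hmax
        rw [IsLocalMaxOn, nhdsWithin_univ] at this
        filter_upwards [this] with z hz
        simpa using hz
      have hgrad : gradient ψ y = 0 := by
        unfold gradient
        rw [hmin.fderiv_eq_zero, map_zero]
      rw [hgrad]
      show Ham A f g ℓ x0 y p0 0 ≤ b1
      unfold Ham
      refine csSup_le (hAne.image _) ?_
      rintro v ⟨a, ha, rfl⟩
      have h1 : -⟪p0, f x0 y a⟫ ≤ ‖p0‖ * Q0 := by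
        have := real_inner_le_norm (-p0) (f x0 y a)
        rw [inner_neg_left, norm_neg] at this
        calc -⟪p0, f x0 y a⟫ ≤ ‖p0‖ * ‖f x0 y a‖ := by linarith
          _ ≤ ‖p0‖ * Q0 := by
            exact mul_le_mul_of_nonneg_left (hfBdd x0 y a ha) (norm_nonneg _)
      have h2 : -ℓ x0 y a ≤ -(min 0 m) := neg_le_neg (hlb y a ha)
      have h3 : ⟪(0 : Euc M), g x0 y a⟫ = 0 := inner_zero_left _
      calc -⟪p0, f x0 y a⟫ - ⟪(0 : Euc M), g x0 y a⟫ - ℓ x0 y a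
          = -⟪p0, f x0 y a⟫ + -ℓ x0 y a := by rw [h3]; ring
        _ ≤ ‖p0‖ * Q0 + -(min 0 m) := add_le_add h1 h2
        _ ≤ b1 := le_max_right _ _
  · -- Bounded below.
    -- controllability at the compact `{x0} ×ˢ closedBall 0 1`
    have hK1 : IsCompact (({x0} : Set (Euc N)) ×ˢ closedBall (0 : Euc M) 1) :=
      isCompact_singleton.prod (isCompact_closedBall _ _)
    obtain ⟨r, hr, hball⟩ := hctrl _ hK1
    -- an upper bound `C` for `ℓ x0` on `closedBall 0 1 × A`
    have hKC : IsCompact ((closedBall (0 : Euc M) 1) ×ˢ A) :=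
      (isCompact_closedBall _ _).prod hA
    have hKCne : ((closedBall (0 : Euc M) 1) ×ˢ A).Nonempty := by
      rcases hAne with ⟨a0, ha0⟩
      exact ⟨(0, a0), by simp, ha0⟩
    have hcontℓ : Continuous fun z : Euc M × Euc k => ℓ x0 z.1 z.2 :=
      hlCont.comp (continuous_const.prodMk continuous_id)
    obtain ⟨zM, hzM, hzmax⟩ := hKC.exists_isMaxOn hKCne hcontℓ.continuousOn
    set C : ℝ := ℓ x0 zM.1 zM.2 with hCdef
    refine ⟨min 0 (-(‖p0‖ * Q0) - C), ?_⟩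
    rintro b ⟨u, husc, htest⟩
    -- find a local max point of `u - ψ` inside the unit ball
    have hK2 : IsCompact (closedBall (0 : Euc M) 2) := isCompact_closedBall _ _
    obtain ⟨yS, hySK, hyS⟩ := usc_exists_isMaxOn' hK2 ⟨0, by simp⟩
      (husc.mono (subset_univ _))
    set Kc : ℝ := max 1 (u yS - u 0 + 1) with hKc
    set ψ : Euc M → ℝ := fun z => Kc * ⟪z, z⟫ with hψdef
    have hψ : ContDiff ℝ 1 ψ := contDiff_const.mul (contDiff_id.inner ℝ contDiff_id)
    have hψval : ∀ z : Euc M, ψ z = Kc * ‖z‖ ^ 2 := by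
      intro z
      simp only [hψdef]
      rw [real_inner_self_eq_norm_sq]
    have huscψ : UpperSemicontinuousOn (fun z => u z - ψ z) (closedBall (0 : Euc M) 2) := by
      have h1 : UpperSemicontinuousOn u (closedBall (0 : Euc M) 2) :=
        husc.mono (subset_univ _)
      have h2 : UpperSemicontinuousOn (fun z => -ψ z) (closedBall (0 : Euc M) 2) :=
        ((hψ.continuous.neg).upperSemicontinuous).upperSemicontinuousOn _
      simpa [sub_eq_add_neg] using h1.add h2
    obtain ⟨y0, hy0K, hy0⟩ := usc_exists_isMaxOn' hK2 ⟨0, by simp⟩ huscψ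
    have hψ0 : ψ 0 = 0 := by rw [hψval]; simp
    have hu0 : u 0 - ψ 0 ≤ u y0 - ψ y0 := hy0 0 (by simp)
    have hylt : ‖y0‖ < 1 := by
      by_contra hge
      push_neg at hge
      have hKc1 : (1 : ℝ) ≤ Kc := le_max_left _ _
      have hKc2 : u yS - u 0 + 1 ≤ Kc := le_max_right _ _
      have huy0 : u y0 ≤ u yS := hyS y0 hy0K
      have hsq : (1:ℝ) ≤ ‖y0‖ ^ 2 := by nlinarith [norm_nonneg y0]
      have hnorm : Kc ≤ Kc * ‖y0‖ ^ 2 := by nlinarith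
      have : u y0 - ψ y0 ≤ u 0 - 1 := by
        rw [hψval]
        nlinarith
      rw [hψ0] at hu0
      linarith
    have hlocmax : IsLocalMaxOn (fun z => u z - ψ z) univ y0 := by
      rw [IsLocalMaxOn, nhdsWithin_univ]
      have hballmem : ball (0 : Euc M) 2 ∈ nhds y0 := by
        refine isOpen_ball.mem_nhds ?_
        simp only [mem_ball, dist_zero_right]
        linarith
      filter_upwards [hballmem] with z hz
      exact hy0 z (ball_subset_closedBall hz)
    have hbH := htest ψ hψ y0 (mem_univ _) hlocmax
    set q : Euc M := gradient ψ y0 with hq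
    have hHam : cellH A f g ℓ x0 p0 y0 q = sSup
        ((fun a => -⟪p0, f x0 y0 a⟫ - ⟪q, g x0 y0 a⟫ - ℓ x0 y0 a) '' A) := rfl
    set E : Set ℝ := (fun a => -⟪p0, f x0 y0 a⟫ - ⟪q, g x0 y0 a⟫ - ℓ x0 y0 a) '' A with hE
    rw [hHam] at hbH
    by_cases hbdd : BddAbove E
    · -- use controllability: `0 ∈ closure (convexHull ℝ (g x0 y0 '' A))`
      have hmemK1 : (x0, y0) ∈ ({x0} : Set (Euc N)) ×ˢ closedBall (0 : Euc M) 1 := by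
        refine ⟨rfl, ?_⟩
        simp only [mem_closedBall, dist_zero_right]
        exact hylt.le
      have h0mem : (0 : Euc M) ∈ closure (convexHull ℝ ((fun a => g x0 y0 a) '' A)) :=
        hball (x0, y0) hmemK1 (mem_ball_self hr)
      have key : ∀ ε > (0:ℝ), -(‖p0‖ * Q0) - C - ε ≤ sSup E := by
        intro ε hε
        have hex : ∃ a ∈ A, -⟪q, g x0 y0 a⟫ ≥ -ε := by
          by_contra hno
          push_neg at hno
          have hsub : (fun a => g x0 y0 a) '' A ⊆ {w : Euc M | ε ≤ ⟪q, w⟫} := by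
            rintro w ⟨a, ha, rfl⟩
            have := hno a ha
            simp only [mem_setOf_eq]
            linarith
          have hconv : Convex ℝ {w : Euc M | ε ≤ ⟪q, w⟫} :=
            convex_halfSpace_ge (innerSL ℝ q).isLinear ε
          have hcl : IsClosed {w : Euc M | ε ≤ ⟪q, w⟫} :=
            isClosed_le continuous_const (innerSL ℝ q).continuous
          have : closure (convexHull ℝ ((fun a => g x0 y0 a) '' A)) ⊆
              {w : Euc M | ε ≤ ⟪q, w⟫} :=
            closure_minimal (convexHull_min hsub hconv) hcl
          have h0 : ε ≤ ⟪q, (0 : Euc M)⟫ := this h0mem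
          rw [inner_zero_right] at h0
          linarith
        obtain ⟨a, ha, hag⟩ := hex
        have hmem : -⟪p0, f x0 y0 a⟫ - ⟪q, g x0 y0 a⟫ - ℓ x0 y0 a ∈ E :=
          ⟨a, ha, rfl⟩
        have h1 : -(‖p0‖ * Q0) ≤ -⟪p0, f x0 y0 a⟫ := by
          have := real_inner_le_norm p0 (f x0 y0 a)
          have h2 : ‖p0‖ * ‖f x0 y0 a‖ ≤ ‖p0‖ * Q0 :=
            mul_le_mul_of_nonneg_left (hfBdd x0 y0 a ha) (norm_nonneg _)
          linarith
        have h3 : -C ≤ -ℓ x0 y0 a := by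
          have : (y0, a) ∈ (closedBall (0 : Euc M) 1) ×ˢ A := by
            refine ⟨?_, ha⟩
            simp only [mem_closedBall, dist_zero_right]
            exact hylt.le
          have h4 := hzmax this
          simp only [mem_setOf_eq] at h4
          linarith
        calc -(‖p0‖ * Q0) - C - ε
            ≤ -⟪p0, f x0 y0 a⟫ - ⟪q, g x0 y0 a⟫ - ℓ x0 y0 a := by linarith
          _ ≤ sSup E := le_csSup hbdd hmem
      have hfin : -(‖p0‖ * Q0) - C ≤ sSup E := by
        refine le_of_forall_pos_le_add fun ε hε => ?_
        linarith [key ε hε]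
      calc min 0 (-(‖p0‖ * Q0) - C) ≤ -(‖p0‖ * Q0) - C := min_le_right _ _
        _ ≤ sSup E := hfin
        _ ≤ b := hbH
    · have hzero : sSup E = 0 := Real.sSup_of_not_bddAbove hbdd
      calc min 0 (-(‖p0‖ * Q0) - C) ≤ 0 := min_le_left _ _
        _ = sSup E := hzero.symm
        _ ≤ b := hbH
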